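/- If p is an odd prime and x ≥ 2, y ≥ 2 are integers with |2^x - p^y| = 1, then p = 3, x = 3 and y = 2, i.e. the only solution is 2^3 - 3^2 = -1. -/
import Mathlib

open Finset

/-- An odd natural number dividing a power of two equals one. -/
lemma odd_dvd_two_pow_eq_one {m x : ℕ} (hm : Odd m) (hd : m ∣ 2 ^ x) : m = 1 :=
  Nat.Coprime.eq_one_of_dvd (Nat.Coprime.pow_right x hm.coprime_two_right) hd

lemma odd_natCast_zmod_two {n : ℕ} (h : Odd n) : (n : ZMod 2) = 1 := by
  obtain ⟨j, hj⟩ := h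
  subst hj
  push_cast
  rw [show ((2:ZMod 2)) = 0 by decide]
  ring

lemma int_odd_of_cast_zmod_two_eq_one {m : ℤ} (h : (m : ZMod 2) = 1) : Odd m := by
  rw [Int.odd_iff]
  by_contra hne
  have h2 : (2:ℤ) ∣ m := by omega
  rw [(ZMod.intCast_zmod_eq_zero_iff_dvd m 2).mpr h2] at h
  exact absurd h (by decide)

lemma two_pow_zmod_four {x : ℕ} (hx : 2 ≤ x) : ((2:ZMod 4))^x = 0 := by
  calc ((2:ZMod 4))^x = 2^2 * 2^(x-2) := by rw [← pow_add]; congr 1; omega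
  _ = 0 := by rw [show ((2:ZMod 4))^2 = 0 by decide, zero_mul]

theorem stmt10 (p : ℕ) (hp : p.Prime) (hodd : Odd p)
    (x y : ℕ) (hx : 2 ≤ x) (hy : 2 ≤ y)
    (h : |(2:ℤ)^x - (p:ℤ)^y| = 1) :
    p = 3 ∧ x = 3 ∧ y = 2 := by
  have hp3 : 3 ≤ p := by
    rcases hodd with ⟨k, hk⟩
    have := hp.two_le
    omega
  have hpz2 : ((p:ℤ) : ZMod 2) = 1 := by
    push_cast
    exact odd_natCast_zmod_two hodd
  rcases abs_eq (by norm_num : (0:ℤ) ≤ 1) |>.mp h with hc | hc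
  · -- 2^x = p^y + 1
    exfalso
    have heq : (2:ℤ)^x = (p:ℤ)^y + 1 := by linarith
    -- mod 4 : p^y ≡ 3, so y is odd
    have hyodd : Odd y := by
      by_contra hye
      rw [Nat.not_odd_iff_even] at hye
      rcases hye with ⟨k, hk⟩
      have h4 : ((2:ZMod 4))^x = ((p:ZMod 4))^y + 1 := by
        have := congrArg (Int.cast : ℤ → ZMod 4) heq
        push_cast at this
        exact this
      rw [two_pow_zmod_four hx] at h4
      have hval : ((p:ZMod 4))^y = 3 := by
        have := eq_neg_of_add_eq_zero_left h4.symm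
        rw [this]; decide
      have hsq : ((p:ZMod 4)^k)^2 = 3 := by
        rw [← pow_mul, show k * 2 = y by omega, hval]
      exact absurd hsq (by revert hsq; exact fun _ => (by decide : ∀ a : ZMod 4, a^2 ≠ 3) _ )
    -- y odd : (p+1) divides 2^x with odd cofactor
    have hgeo : (∑ i ∈ range y, (-(p:ℤ))^i) * ((p:ℤ) + 1) = (p:ℤ)^y + 1 := by
      have := geom_sum_mul (-(p:ℤ)) y
      rw [hyodd.neg_pow] at this
      have h2 : (∑ i ∈ range y, (-(p:ℤ))^i) * (-((p:ℤ) + 1)) = -((p:ℤ)^y + 1) := by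
        rw [show -((p:ℤ)+1) = -(p:ℤ) - 1 by ring, this]; ring
      linarith [h2, mul_neg (∑ i ∈ range y, (-(p:ℤ))^i) ((p:ℤ) + 1)]
    set m : ℤ := ∑ i ∈ range y, (-(p:ℤ))^i with hm
    have hmodd : Odd m := by
      apply int_odd_of_cast_zmod_two_eq_one
      rw [hm]
      push_cast
      calc (∑ i ∈ range y, (-((p:ℤ):ZMod 2))^i) = ∑ i ∈ range y, 1 := by
            apply Finset.sum_congr rfl; intro i _; rw [hpz2, show (-1 : ZMod 2) = 1 by decide, one_pow]
      _ = (y : ZMod 2) := by simp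
      _ = 1 := odd_natCast_zmod_two hyodd
    have hmpos : 0 < m := by
      rcases mul_pos_iff.mp (show 0 < m * ((p:ℤ)+1) by rw [hgeo]; positivity) with ⟨h1, _⟩ | ⟨_, h2⟩
      · exact h1
      · exfalso
        have : (0:ℤ) < (p:ℤ) + 1 := by positivity
        linarith
    have hmdvd : m ∣ (2:ℤ)^x := ⟨(p:ℤ) + 1, by rw [heq, ← hgeo]⟩
    have hmn : m.natAbs ∣ 2^x := by
      have h' := Int.natAbs_dvd_natAbs.mpr hmdvd
      rwa [show ((2:ℤ)^x).natAbs = 2^x by rw [Int.natAbs_pow]; rfl] at h'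
    have hm1 : m = 1 := by
      have := odd_dvd_two_pow_eq_one (Int.natAbs_odd.mpr hmodd) hmn
      omega
    rw [hm1, one_mul] at hgeo
    -- p + 1 = p^y + 1 with y ≥ 2 : impossible
    have h1 : (p:ℤ)^2 ≤ (p:ℤ)^y :=
      pow_le_pow_right₀ (by exact_mod_cast hp.one_le) hy
    have h2 : (3:ℤ) ≤ (p:ℤ) := by exact_mod_cast hp3
    nlinarith [sq (p:ℤ)]
  · -- p^y = 2^x + 1
    have heq : (p:ℤ)^y = (2:ℤ)^x + 1 := by linarith
    have heqn : p^y = 2^x + 1 := by exact_mod_cast heq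
    -- first, y must be even
    have hyeven : Even y := by
      by_contra hye
      rw [Nat.not_even_iff_odd] at hye
      have hgeo : (∑ i ∈ range y, (p:ℤ)^i) * ((p:ℤ) - 1) = (2:ℤ)^x := by
        rw [geom_sum_mul, heq]; ring
      set m : ℤ := ∑ i ∈ range y, (p:ℤ)^i with hm
      have hmodd : Odd m := by
        apply int_odd_of_cast_zmod_two_eq_one
        rw [hm]
        push_cast
        calc (∑ i ∈ range y, (((p:ℤ)):ZMod 2)^i) = ∑ i ∈ range y, 1 := by
              apply Finset.sum_congr rfl; intro i _; rw [hpz2]; simp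
        _ = (y : ZMod 2) := by simp
        _ = 1 := odd_natCast_zmod_two hye
      have hmdvd : m ∣ (2:ℤ)^x := ⟨(p:ℤ) - 1, hgeo.symm⟩
      have hmn : m.natAbs ∣ 2^x := by
        have h' := Int.natAbs_dvd_natAbs.mpr hmdvd
        rwa [show ((2:ℤ)^x).natAbs = 2^x by rw [Int.natAbs_pow]; rfl] at h'
      have hmpos : 0 < m := by
        rw [hm]
        apply Finset.sum_pos
        · intro i _; positivity
        · exact Finset.nonempty_range_iff.mpr (by omega)
      have hm1 : m = 1 := by
        have := odd_dvd_two_pow_eq_one (Int.natAbs_odd.mpr hmodd) hmn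
        omega
      rw [hm1, one_mul] at hgeo
      -- p - 1 = 2^x and p^y = 2^x + 1 = p : impossible for y ≥ 2
      have hpy : (p:ℤ)^y = (p:ℤ) := by linarith
      have h1 : (p:ℤ)^2 ≤ (p:ℤ)^y :=
        pow_le_pow_right₀ (by exact_mod_cast hp.one_le) hy
      have h2 : (3:ℤ) ≤ (p:ℤ) := by exact_mod_cast hp3
      nlinarith [sq (p:ℤ)]
    rcases hyeven with ⟨k, hk⟩
    have hk1 : 1 ≤ k := by omega
    set t : ℕ := p ^ k with ht
    have ht3 : 3 ≤ t := by
      rw [ht]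
      calc 3 ≤ p := hp3
      _ = p^1 := (pow_one p).symm
      _ ≤ p^k := Nat.pow_le_pow_right (by omega) hk1
    have htt : t * t = 2^x + 1 := by
      rw [ht, ← pow_add, ← hk, heqn]
    -- (t-1)(t+1) = 2^x
    have hfact : (t - 1) * (t + 1) = 2^x := by
      obtain ⟨s, hs⟩ : ∃ s, t = s + 1 := ⟨t - 1, by omega⟩
      have h1 : (t - 1) * (t + 1) + 1 = t * t := by
        rw [hs]; simp; ring
      rw [htt] at h1
      exact Nat.add_right_cancel h1
    have hd1 : (t - 1) ∣ 2^x := ⟨t + 1, hfact.symm⟩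
    have hd2 : (t + 1) ∣ 2^x := ⟨t - 1, by rw [mul_comm]; exact hfact.symm⟩
    obtain ⟨a, ha, hae⟩ := (Nat.dvd_prime_pow Nat.prime_two).mp hd1
    obtain ⟨b, hb, hbe⟩ := (Nat.dvd_prime_pow Nat.prime_two).mp hd2
    -- t+1 ≥ 4 so b ≥ 2, so 4 ∣ t+1; then t-1 ≡ 2 mod 4 forces a = 1, t = 3
    have hb2 : 2 ≤ b := by
      by_contra hb'
      interval_cases b <;> omega
    have h4b : 4 ∣ t + 1 := by
      rw [hbe]
      calc (4:ℕ) = 2^2 := rfl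
      _ ∣ 2^b := pow_dvd_pow 2 hb2
    have ha1 : a = 1 := by
      by_contra ha'
      have ha2 : 2 ≤ a := by
        rcases Nat.lt_or_ge a 2 with h' | h'
        · interval_cases a <;> omega
        · exact h'
      have : 4 ∣ t - 1 := by
        rw [hae]
        calc (4:ℕ) = 2^2 := rfl
        _ ∣ 2^a := pow_dvd_pow 2 ha2
      omega
    have ht3' : t = 3 := by rw [ha1] at hae; omega
    -- p^k = 3 : p = 3, k = 1
    have hpdvd : p ∣ 3 := by
      rw [← ht3', ht]
      exact dvd_pow_self p (by omega)
    have hp3' : p = 3 := by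
      rcases (Nat.Prime.eq_one_or_self_of_dvd (by norm_num) p hpdvd) with h' | h'
      · exact absurd h' hp.ne_one
      · exact h'
    have hk1' : k = 1 := by
      by_contra hk'
      have h2k : 2 ≤ k := by omega
      have : 9 ≤ t := by
        rw [ht, hp3']
        calc (9:ℕ) = 3^2 := rfl
        _ ≤ 3^k := Nat.pow_le_pow_right (by norm_num) h2k
      omega
    have hy2 : y = 2 := by omega
    have hx3 : x = 3 := by
      have h8 : 2^x = 2^3 := by
        rw [hy2, hp3'] at heqn
        norm_num at heqn
        omega
      exact Nat.pow_right_injective (le_refl 2) h8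
    exact ⟨hp3', hx3, hy2⟩
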